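/- arXiv:2509.07232 — 5 statements merged into one kernel-verified Lean document; each statement's English description precedes it below -/
import Mathlib

section
/- Every stochastically increasing bivariate copula C satisfies ξ(C) ≤ (3/4)·τ(C) + 1/4. -/
open MeasureTheory Set

noncomputable section

def IsCopula (C : ℝ → ℝ → ℝ) : Prop :=
  (∀ u ∈ Icc (0:ℝ) 1, ∀ v ∈ Icc (0:ℝ) 1, C u v ∈ Icc (0:ℝ) 1) ∧
  (∀ u ∈ Icc (0:ℝ) 1, C u 0 = 0 ∧ C u 1 = u) ∧
  (∀ v ∈ Icc (0:ℝ) 1, C 0 v = 0 ∧ C 1 v = v) ∧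
  (∀ u₁ ∈ Icc (0:ℝ) 1, ∀ u₂ ∈ Icc (0:ℝ) 1, ∀ v₁ ∈ Icc (0:ℝ) 1, ∀ v₂ ∈ Icc (0:ℝ) 1,
    u₁ ≤ u₂ → v₁ ≤ v₂ → 0 ≤ C u₂ v₂ - C u₁ v₂ - C u₂ v₁ + C u₁ v₁)

/-- The (a.e. defined) partial derivative of `C` with respect to its first argument. -/
def d1 (C : ℝ → ℝ → ℝ) (t v : ℝ) : ℝ := deriv (fun s => C s v) t

/-- Chatterjee's rank correlation. -/
def xi (C : ℝ → ℝ → ℝ) : ℝ :=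
  6 * (∫ v in (0:ℝ)..1, ∫ t in (0:ℝ)..1, (d1 C t v) ^ 2) - 2

/-- Spearman's footrule. -/
def psi (C : ℝ → ℝ → ℝ) : ℝ :=
  6 * (∫ v in (0:ℝ)..1, C v v) - 2

/-- Stochastically increasing: for each `v`, `t ↦ ∂₁C(t,v)` agrees a.e. on `[0,1]`
with a non-increasing function. -/
def IsSI (C : ℝ → ℝ → ℝ) : Prop :=
  ∀ v ∈ Icc (0:ℝ) 1, ∃ g : ℝ → ℝ, AntitoneOn g (Icc (0:ℝ) 1) ∧
    (∀ᵐ t ∂(volume.restrict (Icc (0:ℝ) 1)), d1 C t v = g t)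

/-- The (a.e. defined) partial derivative of `C` with respect to its second argument. -/
def d2 (C : ℝ → ℝ → ℝ) (u v : ℝ) : ℝ := deriv (fun s => C u s) v

/-- Kendall's tau. -/
def tau (C : ℝ → ℝ → ℝ) : ℝ :=
  1 - 4 * (∫ v in (0:ℝ)..1, ∫ u in (0:ℝ)..1, d1 C u v * d2 C u v)

/-!
Write `S = ∫₀¹ C(t,t) dt`. If `C` is SI, then for each `v` the section `t ↦ ∂₁C(t,v)` is
non-increasing with values in `[0,1]` and total mass `v`; such a function satisfies
`∫₀¹ (∂₁C)² ≤ ∫₀^v ∂₁C ≤ C(v,v)`, so `ξ(C) ≤ 6S - 2`. For any copula, bound `∂₁C·∂₂C` by `∂₂C`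
for `u ≤ v` and by `∂₁C` for `u > v`; integrating `∂₂C` in `v` first (Fubini on the triangle)
gives `∫∫ ∂₁C ∂₂C ≤ 1 - 2S`, i.e. `τ(C) ≥ 8S - 3`. Eliminating `S` yields the claim.
-/

section RealAnalysis

variable {f : ℝ → ℝ}

lemma lipschitzOnWith_one_of_monotoneOn {s : Set ℝ} (hf : MonotoneOn f s)
    (hg : MonotoneOn (fun x => x - f x) s) : LipschitzOnWith 1 f s := by
  refine LipschitzOnWith.of_dist_le_mul fun x hx y hy => ?_
  rw [NNReal.coe_one, one_mul, Real.dist_eq, Real.dist_eq]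
  rcases le_total x y with h | h
  · have h₁ := hf hx hy h
    have h₂ : x - f x ≤ y - f y := hg hx hy h
    rw [abs_sub_comm, abs_of_nonneg (sub_nonneg.2 h₁), abs_sub_comm, abs_of_nonneg (sub_nonneg.2 h)]
    linarith
  · have h₁ := hf hy hx h
    have h₂ : y - f y ≤ x - f x := hg hy hx h
    rw [abs_of_nonneg (sub_nonneg.2 h₁), abs_of_nonneg (sub_nonneg.2 h)]
    linarith

lemma Monotone.deriv_mem_Icc (hf : Monotone f) (hl : LipschitzWith 1 f) (x : ℝ) :
    deriv f x ∈ Icc (0:ℝ) 1 :=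
  ⟨hf.deriv_nonneg, (le_abs_self _).trans (by simpa using norm_deriv_le_of_lipschitz (x₀ := x) hl)⟩

lemma Monotone.intervalIntegral_deriv_le (hf : Monotone f) {a b : ℝ} (hab : a ≤ b) :
    ∫ x in a..b, deriv f x ≤ f b - f a := by
  have h := (hf.monotoneOn (uIcc a b)).intervalIntegral_deriv_mem_uIcc
  rw [uIcc_of_le (sub_nonneg.2 (hf hab))] at h
  exact h.2

lemma intervalIntegrable_of_mem_Icc (hf : Measurable f) (h01 : ∀ x, f x ∈ Icc (0:ℝ) 1)
    (a b : ℝ) : IntervalIntegrable f volume a b :=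
  (intervalIntegrable_const (c := (1:ℝ))).mono_fun hf.aestronglyMeasurable
    (ae_of_all _ fun x => by simpa [abs_of_nonneg (h01 x).1] using (h01 x).2)

lemma intervalIntegral.integral_mono_on_of_nonneg {g : ℝ → ℝ} {a b : ℝ} (hab : a ≤ b)
    (hf : ∀ x ∈ Icc a b, 0 ≤ f x) (hg : IntervalIntegrable g volume a b)
    (h : ∀ x ∈ Icc a b, f x ≤ g x) : ∫ x in a..b, f x ≤ ∫ x in a..b, g x := by
  rw [intervalIntegral.integral_of_le hab, intervalIntegral.integral_of_le hab]
  have hIoc : ∀ᵐ x ∂volume.restrict (Ioc a b), x ∈ Icc a b :=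
    (ae_restrict_mem measurableSet_Ioc).mono fun x hx => Ioc_subset_Icc_self hx
  exact integral_mono_of_nonneg (hIoc.mono hf) hg.1 (hIoc.mono h)

lemma integral_sq_le_integral_of_antitoneOn (hf : AntitoneOn f (Icc 0 1))
    (hf01 : ∀ t ∈ Icc (0:ℝ) 1, f t ∈ Icc (0:ℝ) 1) {v : ℝ} (hv : v ∈ Icc (0:ℝ) 1)
    (hfv : ∫ t in (0:ℝ)..1, f t ≤ v) :
    ∫ t in (0:ℝ)..1, f t ^ 2 ≤ ∫ t in (0:ℝ)..v, f t := by
  have hsq : AntitoneOn (fun t => f t ^ 2) (Icc 0 1) := fun x hx y hy h =>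
    pow_le_pow_left₀ (hf01 y hy).1 (hf hx hy h) 2
  have hint : ∀ a ∈ Icc (0:ℝ) 1, ∀ b ∈ Icc (0:ℝ) 1, IntervalIntegrable f volume a b :=
    fun a ha b hb => (hf.mono (uIcc_subset_Icc ha hb)).intervalIntegrable
  have hint_sq : ∀ a ∈ Icc (0:ℝ) 1, ∀ b ∈ Icc (0:ℝ) 1,
      IntervalIntegrable (fun t => f t ^ 2) volume a b :=
    fun a ha b hb => (hsq.mono (uIcc_subset_Icc ha hb)).intervalIntegrable
  have h0 : (0:ℝ) ∈ Icc (0:ℝ) 1 := left_mem_Icc.2 zero_le_one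
  have h1 : (1:ℝ) ∈ Icc (0:ℝ) 1 := right_mem_Icc.2 zero_le_one
  -- with `c = f v`: `f² ≤ c f` on `[v, 1]` and `f² ≤ f + c (f - 1)` on `[0, v]`
  set c := f v
  have hc : 0 ≤ c := (hf01 v hv).1
  have upper : ∫ t in v..1, f t ^ 2 ≤ ∫ t in v..1, c * f t :=
    intervalIntegral.integral_mono_on hv.2 (hint_sq v hv 1 h1) ((hint v hv 1 h1).const_mul c)
      fun t ht => by
        have ht' : t ∈ Icc (0:ℝ) 1 := ⟨hv.1.trans ht.1, ht.2⟩
        rw [sq]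
        exact mul_le_mul_of_nonneg_right (hf hv ht' ht.1) (hf01 t ht').1
  have lower : ∫ t in (0:ℝ)..v, f t ^ 2 ≤ ∫ t in (0:ℝ)..v, (f t + c * (f t - 1)) :=
    intervalIntegral.integral_mono_on hv.1 (hint_sq 0 h0 v hv)
      ((hint 0 h0 v hv).add (((hint 0 h0 v hv).sub intervalIntegrable_const).const_mul c))
      fun t ht => by
        have ht' : t ∈ Icc (0:ℝ) 1 := ⟨ht.1, ht.2.trans hv.2⟩
        nlinarith [hf ht' hv ht.2, (hf01 t ht').2]
  rw [intervalIntegral.integral_const_mul] at upper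
  rw [intervalIntegral.integral_add (hint 0 h0 v hv)
      (((hint 0 h0 v hv).sub intervalIntegrable_const).const_mul c),
    intervalIntegral.integral_const_mul,
    intervalIntegral.integral_sub (hint 0 h0 v hv) intervalIntegrable_const,
    intervalIntegral.integral_const, smul_eq_mul, mul_one, sub_zero] at lower
  have split := intervalIntegral.integral_add_adjacent_intervals (hint 0 h0 v hv) (hint v hv 1 h1)
  rw [← intervalIntegral.integral_add_adjacent_intervals (hint_sq 0 h0 v hv) (hint_sq v hv 1 h1)]
  nlinarith

end RealAnalysis

section Triangle

variable {F : ℝ → ℝ → ℝ} {a b : ℝ}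

lemma setIntegral_Ioc_ite_le_left {v : ℝ} (hv : v ∈ Ioc a b) :
    ∫ u in Ioc a b, (if u ≤ v then F u v else 0) = ∫ u in a..v, F u v := by
  have hset : Iic v ∩ Ioc a b = Ioc a v := by
    ext u; simp only [mem_inter_iff, mem_Iic, mem_Ioc]; grind
  have hind : (fun u => if u ≤ v then F u v else 0) = (Iic v).indicator (F · v) := by
    ext u; simp [indicator_apply]
  rw [hind, integral_indicator measurableSet_Iic, Measure.restrict_restrict measurableSet_Iic,
    hset, intervalIntegral.integral_of_le hv.1.le]

lemma setIntegral_Ioc_ite_le_right {u : ℝ} (hu : u ∈ Ioc a b) :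
    ∫ v in Ioc a b, (if u ≤ v then F u v else 0) = ∫ v in u..b, F u v := by
  have hset : Ici u ∩ Ioc a b = Icc u b := by
    ext v; simp only [mem_inter_iff, mem_Ici, mem_Ioc, mem_Icc]; grind
  have hind : (fun v => if u ≤ v then F u v else 0) = (Ici u).indicator (F u) := by
    ext v; simp [indicator_apply]
  rw [hind, integral_indicator measurableSet_Ici, Measure.restrict_restrict measurableSet_Ici,
    hset, integral_Icc_eq_integral_Ioc, intervalIntegral.integral_of_le hu.2]

variable (hF : Integrable (Function.uncurry F)
  ((volume.restrict (Ioc a b)).prod (volume.restrict (Ioc a b))))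
include hF

lemma integrable_uncurry_ite_le :
    Integrable (Function.uncurry fun u v => if u ≤ v then F u v else 0)
      ((volume.restrict (Ioc a b)).prod (volume.restrict (Ioc a b))) :=
  (hF.indicator (measurableSet_le measurable_fst measurable_snd)).congr
    (ae_of_all _ fun p => by simp [indicator_apply, Function.uncurry])

lemma intervalIntegrable_integral_triangle (hab : a ≤ b) :
    IntervalIntegrable (fun v => ∫ u in a..v, F u v) volume a b := by
  refine (intervalIntegrable_iff_integrableOn_Ioc_of_le hab).2
    ((integrable_uncurry_ite_le hF).integral_prod_right.congr ?_)
  filter_upwards [ae_restrict_mem measurableSet_Ioc] with v hv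
    using setIntegral_Ioc_ite_le_left hv

lemma integral_integral_triangle_swap (hab : a ≤ b) :
    ∫ v in a..b, ∫ u in a..v, F u v = ∫ u in a..b, ∫ v in u..b, F u v := by
  calc ∫ v in a..b, ∫ u in a..v, F u v
      = ∫ v in Ioc a b, ∫ u in Ioc a b, (if u ≤ v then F u v else 0) := by
        rw [intervalIntegral.integral_of_le hab]
        refine setIntegral_congr_fun measurableSet_Ioc fun v hv => ?_
        exact (setIntegral_Ioc_ite_le_left hv).symm
    _ = ∫ u in Ioc a b, ∫ v in Ioc a b, (if u ≤ v then F u v else 0) :=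
        (integral_integral_swap (integrable_uncurry_ite_le hF)).symm
    _ = ∫ u in a..b, ∫ v in u..b, F u v := by
        rw [intervalIntegral.integral_of_le hab]
        exact setIntegral_congr_fun measurableSet_Ioc fun u hu => setIntegral_Ioc_ite_le_right hu

end Triangle

/-- Clamping both arguments makes the partial derivatives lie in `[0,1]` everywhere and be jointly
measurable, while inside the unit square they agree with `d1` and `d2`. -/
def extendUnitSquare (C : ℝ → ℝ → ℝ) (u v : ℝ) : ℝ :=
  C (projIcc 0 1 zero_le_one u) (projIcc 0 1 zero_le_one v)

lemma extendUnitSquare_of_mem {C : ℝ → ℝ → ℝ} {u v : ℝ} (hu : u ∈ Icc (0:ℝ) 1)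
    (hv : v ∈ Icc (0:ℝ) 1) : extendUnitSquare C u v = C u v := by
  simp [extendUnitSquare, projIcc_of_mem _ hu, projIcc_of_mem _ hv]

lemma d1_eq_deriv_extendUnitSquare {C : ℝ → ℝ → ℝ} {t v : ℝ} (ht : t ∈ Ioo (0:ℝ) 1)
    (hv : v ∈ Icc (0:ℝ) 1) : d1 C t v = deriv (fun s => extendUnitSquare C s v) t :=
  Filter.EventuallyEq.deriv_eq <| Filter.eventually_of_mem (isOpen_Ioo.mem_nhds ht) fun _ hs =>
    (extendUnitSquare_of_mem (Ioo_subset_Icc_self hs) hv).symm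

lemma d2_eq_deriv_extendUnitSquare {C : ℝ → ℝ → ℝ} {u v : ℝ} (hu : u ∈ Icc (0:ℝ) 1)
    (hv : v ∈ Ioo (0:ℝ) 1) : d2 C u v = deriv (extendUnitSquare C u) v :=
  Filter.EventuallyEq.deriv_eq <| Filter.eventually_of_mem (isOpen_Ioo.mem_nhds hv) fun _ hs =>
    (extendUnitSquare_of_mem hu (Ioo_subset_Icc_self hs)).symm

lemma integral_integral_d1_mul_d2_eq {C : ℝ → ℝ → ℝ} :
    ∫ v in (0:ℝ)..1, ∫ u in (0:ℝ)..1, d1 C u v * d2 C u v =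
      ∫ v in (0:ℝ)..1, ∫ u in (0:ℝ)..1,
        deriv (fun s => extendUnitSquare C s v) u * deriv (extendUnitSquare C u) v := by
  refine intervalIntegral.integral_congr_uIoo fun v hv => ?_
  refine intervalIntegral.integral_congr_uIoo fun u hu => ?_
  rw [uIoo_of_le zero_le_one] at hu hv
  simp only [d1_eq_deriv_extendUnitSquare hu (Ioo_subset_Icc_self hv),
    d2_eq_deriv_extendUnitSquare (Ioo_subset_Icc_self hu) hv]

namespace IsCopula

variable {C : ℝ → ℝ → ℝ}

lemma monotoneOn_left (hC : IsCopula C) {v : ℝ} (hv : v ∈ Icc (0:ℝ) 1) :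
    MonotoneOn (fun u => C u v) (Icc 0 1) := fun a ha b hb hab => by
  have := hC.2.2.2 a ha b hb 0 (left_mem_Icc.2 zero_le_one) v hv hab hv.1
  linarith [(hC.2.1 a ha).1, (hC.2.1 b hb).1]

lemma monotoneOn_sub_left (hC : IsCopula C) {v : ℝ} (hv : v ∈ Icc (0:ℝ) 1) :
    MonotoneOn (fun u => u - C u v) (Icc 0 1) := fun a ha b hb hab => by
  have := hC.2.2.2 a ha b hb v hv 1 (right_mem_Icc.2 zero_le_one) hab hv.2
  linarith [(hC.2.1 a ha).2, (hC.2.1 b hb).2]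

lemma monotoneOn_right (hC : IsCopula C) {u : ℝ} (hu : u ∈ Icc (0:ℝ) 1) :
    MonotoneOn (C u) (Icc 0 1) := fun a ha b hb hab => by
  have := hC.2.2.2 0 (left_mem_Icc.2 zero_le_one) u hu a ha b hb hu.1 hab
  linarith [(hC.2.2.1 a ha).1, (hC.2.2.1 b hb).1]

lemma monotoneOn_sub_right (hC : IsCopula C) {u : ℝ} (hu : u ∈ Icc (0:ℝ) 1) :
    MonotoneOn (fun v => v - C u v) (Icc 0 1) := fun a ha b hb hab => by
  have := hC.2.2.2 u hu 1 (right_mem_Icc.2 zero_le_one) a ha b hb hu.2 hab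
  linarith [(hC.2.2.1 a ha).2, (hC.2.2.1 b hb).2]

lemma intervalIntegrable_diag (hC : IsCopula C) :
    IntervalIntegrable (fun t => C t t) volume 0 1 := by
  refine MonotoneOn.intervalIntegrable fun a ha b hb hab => ?_
  rw [uIcc_of_le zero_le_one] at ha hb
  exact (hC.monotoneOn_left ha ha hb hab).trans (hC.monotoneOn_right hb ha hb hab)

lemma monotone_extendUnitSquare_left (hC : IsCopula C) (v : ℝ) :
    Monotone fun u => extendUnitSquare C u v := fun _ _ h =>
  hC.monotoneOn_left (projIcc _ _ _ v).2 (projIcc _ _ _ _).2 (projIcc _ _ _ _).2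
    (monotone_projIcc _ h)

lemma monotone_extendUnitSquare_right (hC : IsCopula C) (u : ℝ) :
    Monotone (extendUnitSquare C u) := fun _ _ h =>
  hC.monotoneOn_right (projIcc _ _ _ u).2 (projIcc _ _ _ _).2 (projIcc _ _ _ _).2
    (monotone_projIcc _ h)

lemma lipschitzWith_extendUnitSquare_left (hC : IsCopula C) (v : ℝ) :
    LipschitzWith 1 fun u => extendUnitSquare C u v := by
  have hv := (projIcc 0 1 zero_le_one v).2
  have h := (lipschitzOnWith_one_of_monotoneOn (hC.monotoneOn_left hv)
    (hC.monotoneOn_sub_left hv)).to_restrict.comp (LipschitzWith.projIcc zero_le_one)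
  rwa [mul_one] at h

lemma lipschitzWith_extendUnitSquare_right (hC : IsCopula C) (u : ℝ) :
    LipschitzWith 1 (extendUnitSquare C u) := by
  have hu := (projIcc 0 1 zero_le_one u).2
  have h := (lipschitzOnWith_one_of_monotoneOn (hC.monotoneOn_right hu)
    (hC.monotoneOn_sub_right hu)).to_restrict.comp (LipschitzWith.projIcc zero_le_one)
  rwa [mul_one] at h

lemma deriv_extendUnitSquare_left_mem_Icc (hC : IsCopula C) (t v : ℝ) :
    deriv (fun s => extendUnitSquare C s v) t ∈ Icc (0:ℝ) 1 :=
  (hC.monotone_extendUnitSquare_left v).deriv_mem_Icc (hC.lipschitzWith_extendUnitSquare_left v) t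

lemma deriv_extendUnitSquare_right_mem_Icc (hC : IsCopula C) (u v : ℝ) :
    deriv (extendUnitSquare C u) v ∈ Icc (0:ℝ) 1 :=
  (hC.monotone_extendUnitSquare_right u).deriv_mem_Icc (hC.lipschitzWith_extendUnitSquare_right u) v

lemma measurable_deriv_extendUnitSquare_right (hC : IsCopula C) :
    Measurable fun p : ℝ × ℝ => deriv (extendUnitSquare C p.1) p.2 :=
  measurable_deriv_with_param (LipschitzWith.uncurry hC.lipschitzWith_extendUnitSquare_left
    hC.lipschitzWith_extendUnitSquare_right).continuous

lemma integral_deriv_extendUnitSquare_left_sq_le (hC : IsCopula C) (hSI : IsSI C) {v : ℝ}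
    (hv : v ∈ Icc (0:ℝ) 1) :
    ∫ t in (0:ℝ)..1, (deriv (fun s => extendUnitSquare C s v) t) ^ 2 ≤ C v v := by
  set D := fun t => deriv (fun s => extendUnitSquare C s v) t
  have h0 : (0:ℝ) ∈ Icc (0:ℝ) 1 := left_mem_Icc.2 zero_le_one
  have h1 : (1:ℝ) ∈ Icc (0:ℝ) 1 := right_mem_Icc.2 zero_le_one
  obtain ⟨g, hg, hgd⟩ := hSI v hv
  set G := fun t => (projIcc 0 1 zero_le_one (g t) : ℝ)
  have hG : AntitoneOn G (Icc 0 1) :=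
    ((Subtype.mono_coe _).comp (monotone_projIcc zero_le_one)).comp_antitoneOn hg
  have hDG : D =ᵐ[volume.restrict (Icc 0 1)] G := by
    rw [← restrict_Ioo_eq_restrict_Icc] at hgd ⊢
    filter_upwards [hgd, ae_restrict_mem measurableSet_Ioo] with t hdg ht
    have hDg : D t = g t := (d1_eq_deriv_extendUnitSquare ht hv).symm.trans hdg
    have hg01 : g t ∈ Icc (0:ℝ) 1 := hDg ▸ hC.deriv_extendUnitSquare_left_mem_Icc t v
    simp [G, hDg, projIcc_of_mem _ hg01]
  have hcongr : ∀ b ∈ Icc (0:ℝ) 1, ∀ φ : ℝ → ℝ,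
      ∫ t in (0:ℝ)..b, φ (D t) = ∫ t in (0:ℝ)..b, φ (G t) := fun b hb φ => by
      rw [intervalIntegral.integral_of_le hb.1, intervalIntegral.integral_of_le hb.1]
      exact integral_congr_ae (ae_restrict_of_ae_restrict_of_subset
        (Ioc_subset_Icc_self.trans (Icc_subset_Icc_right hb.2)) (hDG.fun_comp φ))
  have hftc := fun b (hb : b ∈ Icc (0:ℝ) 1) =>
    (hC.monotone_extendUnitSquare_left v).intervalIntegral_deriv_le hb.1
  have hGv : ∫ t in (0:ℝ)..1, G t ≤ v := by
    refine (hcongr 1 h1 id).symm.trans_le ((hftc 1 h1).trans_eq ?_)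
    rw [extendUnitSquare_of_mem h1 hv, extendUnitSquare_of_mem h0 hv, (hC.2.2.1 v hv).1,
      (hC.2.2.1 v hv).2, sub_zero]
  calc ∫ t in (0:ℝ)..1, D t ^ 2 = ∫ t in (0:ℝ)..1, G t ^ 2 := hcongr 1 h1 (· ^ 2)
    _ ≤ ∫ t in (0:ℝ)..v, G t :=
        integral_sq_le_integral_of_antitoneOn hG (fun _ _ => (projIcc _ _ _ _).2) hv hGv
    _ = ∫ t in (0:ℝ)..v, D t := (hcongr v hv id).symm
    _ ≤ C v v := (hftc v hv).trans_eq <| by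
        rw [extendUnitSquare_of_mem hv hv, extendUnitSquare_of_mem h0 hv, (hC.2.2.1 v hv).1,
          sub_zero]

lemma integral_deriv_mul_deriv_extendUnitSquare_le (hC : IsCopula C) {v : ℝ}
    (hv : v ∈ Icc (0:ℝ) 1) :
    ∫ u in (0:ℝ)..1, deriv (fun s => extendUnitSquare C s v) u * deriv (extendUnitSquare C u) v
      ≤ (v - C v v) + ∫ u in (0:ℝ)..v, deriv (extendUnitSquare C u) v := by
  set D₁ := fun u => deriv (fun s => extendUnitSquare C s v) u
  set D₂ := fun u => deriv (extendUnitSquare C u) v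
  have b₁ : ∀ u, D₁ u ∈ Icc (0:ℝ) 1 := fun u => hC.deriv_extendUnitSquare_left_mem_Icc u v
  have b₂ : ∀ u, D₂ u ∈ Icc (0:ℝ) 1 := fun u => hC.deriv_extendUnitSquare_right_mem_Icc u v
  have m₁ : Measurable D₁ := measurable_deriv _
  have m₂ : Measurable D₂ :=
    hC.measurable_deriv_extendUnitSquare_right.comp (measurable_id.prodMk measurable_const)
  have i₁ := intervalIntegrable_of_mem_Icc m₁ b₁
  have i₂ := intervalIntegrable_of_mem_Icc m₂ b₂
  have i₁₂ : ∀ a b, IntervalIntegrable (fun u => D₁ u * D₂ u) volume a b :=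
    intervalIntegrable_of_mem_Icc (m₁.mul m₂) fun u =>
      ⟨mul_nonneg (b₁ u).1 (b₂ u).1, mul_le_one₀ (b₁ u).2 (b₂ u).1 (b₂ u).2⟩
  have left : ∫ u in (0:ℝ)..v, D₁ u * D₂ u ≤ ∫ u in (0:ℝ)..v, D₂ u :=
    intervalIntegral.integral_mono_on hv.1 (i₁₂ _ _) (i₂ _ _) fun u _ =>
      mul_le_of_le_one_left (b₂ u).1 (b₁ u).2
  have right : ∫ u in v..1, D₁ u * D₂ u ≤ ∫ u in v..1, D₁ u :=
    intervalIntegral.integral_mono_on hv.2 (i₁₂ _ _) (i₁ _ _) fun u _ =>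
      mul_le_of_le_one_right (b₁ u).1 (b₂ u).2
  have ftc : ∫ u in v..1, D₁ u ≤ v - C v v :=
    ((hC.monotone_extendUnitSquare_left v).intervalIntegral_deriv_le hv.2).trans_eq <| by
      rw [extendUnitSquare_of_mem (right_mem_Icc.2 zero_le_one) hv, extendUnitSquare_of_mem hv hv,
        (hC.2.2.1 v hv).2]
  show ∫ u in (0:ℝ)..1, D₁ u * D₂ u ≤ (v - C v v) + ∫ u in (0:ℝ)..v, D₂ u
  rw [← intervalIntegral.integral_add_adjacent_intervals (i₁₂ 0 v) (i₁₂ v 1)]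
  linarith

lemma integral_sub_diag (hC : IsCopula C) :
    ∫ t in (0:ℝ)..1, (t - C t t) = 1 / 2 - ∫ t in (0:ℝ)..1, C t t := by
  rw [intervalIntegral.integral_sub intervalIntegral.intervalIntegrable_id
    hC.intervalIntegrable_diag, integral_id]
  norm_num

lemma integral_integral_d1_sq_le (hC : IsCopula C) (hSI : IsSI C) :
    ∫ v in (0:ℝ)..1, ∫ t in (0:ℝ)..1, (d1 C t v) ^ 2 ≤ ∫ t in (0:ℝ)..1, C t t := by
  refine intervalIntegral.integral_mono_on_of_nonneg zero_le_one
    (fun v _ => intervalIntegral.integral_nonneg zero_le_one fun _ _ => sq_nonneg _)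
    hC.intervalIntegrable_diag fun v hv => le_of_eq_of_le ?_
      (hC.integral_deriv_extendUnitSquare_left_sq_le hSI hv)
  refine intervalIntegral.integral_congr_uIoo fun t ht => ?_
  rw [uIoo_of_le zero_le_one] at ht
  simp only [d1_eq_deriv_extendUnitSquare ht hv]

lemma integrable_uncurry_deriv_extendUnitSquare_right (hC : IsCopula C) (a b : ℝ) :
    Integrable (Function.uncurry fun u v => deriv (extendUnitSquare C u) v)
      ((volume.restrict (Ioc a b)).prod (volume.restrict (Ioc a b))) :=
  Integrable.of_bound hC.measurable_deriv_extendUnitSquare_right.aestronglyMeasurable 1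
    (ae_of_all _ fun p => by
      have hp := hC.deriv_extendUnitSquare_right_mem_Icc p.1 p.2
      simpa [Function.uncurry, abs_of_nonneg hp.1] using hp.2)

lemma integral_integral_triangle_deriv_extendUnitSquare_right_le (hC : IsCopula C) :
    ∫ v in (0:ℝ)..1, ∫ u in (0:ℝ)..v, deriv (extendUnitSquare C u) v
      ≤ 1 / 2 - ∫ t in (0:ℝ)..1, C t t := by
  rw [integral_integral_triangle_swap (hC.integrable_uncurry_deriv_extendUnitSquare_right 0 1)
    zero_le_one, ← hC.integral_sub_diag]
  refine intervalIntegral.integral_mono_on_of_nonneg zero_le_one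
    (fun u hu => intervalIntegral.integral_nonneg hu.2 fun v _ =>
      (hC.deriv_extendUnitSquare_right_mem_Icc u v).1)
    (intervalIntegral.intervalIntegrable_id.sub hC.intervalIntegrable_diag) fun u hu => ?_
  refine ((hC.monotone_extendUnitSquare_right u).intervalIntegral_deriv_le hu.2).trans_eq ?_
  rw [extendUnitSquare_of_mem hu (right_mem_Icc.2 zero_le_one), extendUnitSquare_of_mem hu hu,
    (hC.2.1 u hu).2]

lemma integral_integral_d1_mul_d2_le (hC : IsCopula C) :
    ∫ v in (0:ℝ)..1, ∫ u in (0:ℝ)..1, d1 C u v * d2 C u v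
      ≤ 1 - 2 * ∫ t in (0:ℝ)..1, C t t := by
  have hsub := intervalIntegral.intervalIntegrable_id.sub hC.intervalIntegrable_diag
  have htri := intervalIntegrable_integral_triangle
    (hC.integrable_uncurry_deriv_extendUnitSquare_right 0 1) zero_le_one
  rw [integral_integral_d1_mul_d2_eq]
  calc _ ≤ ∫ v in (0:ℝ)..1, ((v - C v v) + ∫ u in (0:ℝ)..v, deriv (extendUnitSquare C u) v) :=
        intervalIntegral.integral_mono_on_of_nonneg zero_le_one
          (fun v _ => intervalIntegral.integral_nonneg zero_le_one fun u _ =>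
            mul_nonneg (hC.deriv_extendUnitSquare_left_mem_Icc u v).1
              (hC.deriv_extendUnitSquare_right_mem_Icc u v).1)
          (hsub.add htri) fun v hv => hC.integral_deriv_mul_deriv_extendUnitSquare_le hv
    _ = (1 / 2 - ∫ t in (0:ℝ)..1, C t t)
          + ∫ v in (0:ℝ)..1, ∫ u in (0:ℝ)..v, deriv (extendUnitSquare C u) v := by
        rw [intervalIntegral.integral_add hsub htri, hC.integral_sub_diag]
    _ ≤ 1 - 2 * ∫ t in (0:ℝ)..1, C t t := by
        linarith [hC.integral_integral_triangle_deriv_extendUnitSquare_right_le]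

end IsCopula

/-- Every stochastically increasing bivariate copula satisfies
`ξ(C) ≤ (3/4)·τ(C) + 1/4`. -/
theorem xi_le_tau_bound_of_SI (C : ℝ → ℝ → ℝ) (hC : IsCopula C) (hSI : IsSI C) :
    xi C ≤ 3 / 4 * tau C + 1 / 4 := by
  have hξ := hC.integral_integral_d1_sq_le hSI
  have hτ := hC.integral_integral_d1_mul_d2_le
  unfold xi tau
  linarith
end
end

section
/- Let v ∈ [0,1] and let h : [0,1] → [0,1] be non-increasing with ∫₀¹ h(t) dt = v. Then ∫₀¹ h(t)² dt ≤ ∫₀^v h(t) dt, and equality holds if and only if there exist 0 ≤ A ≤ B ≤ 1 and α ∈ [0,1] with A + α(B−A) = v such that h(t) = 𝟙_{t < A} + α·𝟙_{(A,B)}(t) for almost every t ∈ [0,1]. -/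
open MeasureTheory Set

noncomputable section

/-- two-level function -/
private def tl (A B α : ℝ) : ℝ → ℝ := fun t =>
  (if t < A then (1:ℝ) else 0) + α * (if t ∈ Ioo A B then (1:ℝ) else 0)

private lemma ae_ne_vol (A : ℝ) : ∀ᵐ t : ℝ ∂(volume : Measure ℝ), t ≠ A := by
  rw [ae_iff]; simp only [not_not, setOf_eq_eq_singleton]; exact measure_singleton A

private lemma tl_meas (A B α : ℝ) : Measurable (tl A B α) := by
  apply Measurable.add
  · exact Measurable.ite measurableSet_Iio measurable_const measurable_const
  · exact Measurable.const_mul (Measurable.ite measurableSet_Ioo measurable_const measurable_const) α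

private lemma tl_ii (A B α a b : ℝ) : IntervalIntegrable (tl A B α) volume a b := by
  constructor <;>
  · refine Integrable.mono' (g := fun _ => 1 + |α|) (integrableOn_const measure_Ioc_lt_top.ne)
      (tl_meas A B α).aestronglyMeasurable.restrict (ae_of_all _ fun t => ?_)
    simp only [tl, Real.norm_eq_abs]
    have h1 : |(if t < A then (1:ℝ) else 0)| ≤ 1 := by split <;> simp
    have h2 : |α * (if t ∈ Ioo A B then (1:ℝ) else 0)| ≤ |α| := by
      rw [abs_mul]; split <;> simp [abs_nonneg]
    calc |_| ≤ _ := abs_add_le _ _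
    _ ≤ 1 + |α| := add_le_add h1 h2

private lemma tl_integral (A B α c : ℝ) (h0 : 0 ≤ A) (hAB : A ≤ B) (hAc : A ≤ c) :
    (∫ t in (0:ℝ)..c, tl A B α t) = A + α * (min c B - A) := by
  set m := min c B with hm
  have hAm : A ≤ m := le_min hAc hAB
  have hmc : m ≤ c := min_le_left _ _
  have e1 : (∫ t in (0:ℝ)..A, tl A B α t) = A := by
    rw [intervalIntegral.integral_congr_ae (g := fun _ => (1:ℝ)) ?_]
    · simp
    · filter_upwards [ae_ne_vol A] with t htA ht
      rw [uIoc_of_le h0] at ht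
      have : t < A := lt_of_le_of_ne ht.2 htA
      have h2 : ¬ A < t := not_lt.2 this.le
      simp [tl, this, h2]
  have e2 : (∫ t in A..m, tl A B α t) = α * (m - A) := by
    rw [intervalIntegral.integral_congr_ae (g := fun _ => α) ?_]
    · simp [mul_comm]
    · filter_upwards [ae_ne_vol B] with t htB ht
      rw [uIoc_of_le hAm] at ht
      have h1 : A < t := ht.1
      have h2 : t < B := lt_of_le_of_ne (ht.2.trans (min_le_right _ _)) htB
      simp [tl, not_lt.2 h1.le, h1, h2]
  have e3 : (∫ t in m..c, tl A B α t) = 0 := by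
    rcases le_or_gt c B with hcB | hBc
    · rw [show m = c from min_eq_left hcB, intervalIntegral.integral_same]
    · have hmB : m = B := min_eq_right hBc.le
      rw [intervalIntegral.integral_congr (g := fun _ => (0:ℝ)) ?_, intervalIntegral.integral_zero]
      intro t ht
      rw [uIcc_of_le hmc, hmB] at ht
      have h1 : ¬ t < A := not_lt.2 (hAB.trans ht.1)
      have h2 : t ∉ Ioo A B := fun hio => absurd hio.2 (not_lt.2 ht.1)
      simp [tl, h1, h2]
  have s1 : (∫ t in (0:ℝ)..m, tl A B α t) = A + α * (m - A) := by
    rw [← intervalIntegral.integral_add_adjacent_intervals (tl_ii A B α 0 A) (tl_ii A B α A m), e1, e2]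
  rw [← intervalIntegral.integral_add_adjacent_intervals (tl_ii A B α 0 m) (tl_ii A B α m c), s1, e3, add_zero]

private lemma tl_sq (A B α : ℝ) (hAB : A ≤ B) (t : ℝ) : (tl A B α t)^2 = tl A B (α^2) t := by
  unfold tl
  rcases lt_trichotomy t A with h1 | h1 | h1
  · have h2 : t ∉ Ioo A B := fun hio => absurd hio.1 (not_lt.2 h1.le)
    simp [h1, h2]
  · subst h1
    have h2 : t ∉ Ioo t B := fun hio => absurd hio.1 (lt_irrefl t)
    simp [lt_irrefl, h2]
  · by_cases h2 : t ∈ Ioo A B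
    · simp [not_lt.2 h1.le, h2, mul_pow]
    · simp [not_lt.2 h1.le, h2]

private lemma integrableOn_of_bdd {f : ℝ → ℝ} (hf : Measurable f) (C : ℝ)
    (hC : ∀ t ∈ Icc (0:ℝ) 1, |f t| ≤ C) : IntegrableOn f (Icc (0:ℝ) 1) := by
  refine Integrable.mono' (g := fun _ => C) (integrableOn_const measure_Icc_lt_top.ne)
    hf.aestronglyMeasurable.restrict ?_
  filter_upwards [ae_restrict_mem measurableSet_Icc] with t ht
  simpa [Real.norm_eq_abs] using hC t ht

private lemma ii_of_int {f : ℝ → ℝ} (hf : IntegrableOn f (Icc (0:ℝ) 1)) {a b : ℝ}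
    (ha : 0 ≤ a) (hb : b ≤ 1) (hab : a ≤ b) : IntervalIntegrable f volume a b := by
  constructor
  · exact hf.mono_set fun x hx => ⟨ha.trans hx.1.le, hx.2.trans hb⟩
  · exact hf.mono_set fun x hx => absurd (hx.1.trans_le (hx.2.trans hab)) (lt_irrefl b)

private lemma interval_congr {f g : ℝ → ℝ} {a b : ℝ} (ha : 0 ≤ a) (hb : b ≤ 1) (hab : a ≤ b)
    (hfg : ∀ᵐ t ∂(volume.restrict (Icc (0:ℝ) 1)), f t = g t) :
    (∫ t in a..b, f t) = ∫ t in a..b, g t := by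
  rw [intervalIntegral.integral_of_le hab, intervalIntegral.integral_of_le hab]
  refine integral_congr_ae (ae_restrict_of_ae_restrict_of_subset
    (Set.Ioc_subset_Icc_self.trans (Icc_subset_Icc ha hb)) hfg)

/-- If `h : [0,1] → [0,1]` is non-increasing with `∫₀¹ h = v`, then
`∫₀¹ h² ≤ ∫₀ᵛ h`, with equality iff `h` has the two-level form
`𝟙_{t < A} + α·𝟙_{(A,B)}(t)` a.e. for some `0 ≤ A ≤ B ≤ 1`, `α ∈ [0,1]`,
`A + α(B - A) = v`. -/
theorem jensen_equality_two_level (v : ℝ) (hv : v ∈ Icc (0:ℝ) 1)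
    (h : ℝ → ℝ) (hmeas : Measurable h) (hanti : AntitoneOn h (Icc (0:ℝ) 1))
    (hrange : ∀ t ∈ Icc (0:ℝ) 1, h t ∈ Icc (0:ℝ) 1)
    (hint : (∫ t in (0:ℝ)..1, h t) = v) :
    (∫ t in (0:ℝ)..1, (h t) ^ 2) ≤ (∫ t in (0:ℝ)..v, h t) ∧
    ((∫ t in (0:ℝ)..1, (h t) ^ 2) = (∫ t in (0:ℝ)..v, h t) ↔
      ∃ A B α : ℝ, 0 ≤ A ∧ A ≤ B ∧ B ≤ 1 ∧ α ∈ Icc (0:ℝ) 1 ∧ A + α * (B - A) = v ∧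
        (∀ᵐ t ∂(volume.restrict (Icc (0:ℝ) 1)),
          h t = (if t < A then (1:ℝ) else 0) + α * (if t ∈ Ioo A B then (1:ℝ) else 0))) := by
  classical
  obtain ⟨hv0, hv1⟩ := hv
  set α := h v with hαdef
  obtain ⟨hα0, hα1⟩ := hrange v ⟨hv0, hv1⟩
  set χ : ℝ → ℝ := fun t => if t ≤ v then (1:ℝ) else 0 with hχdef
  have hχmeas : Measurable χ := Measurable.ite measurableSet_Iic measurable_const measurable_const
  have hIh : IntegrableOn h (Icc (0:ℝ) 1) :=
    integrableOn_of_bdd hmeas 1 fun t ht =>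
      abs_le.2 ⟨by linarith [(hrange t ht).1], (hrange t ht).2⟩
  have hIh2 : IntegrableOn (fun t => (h t)^2) (Icc (0:ℝ) 1) :=
    integrableOn_of_bdd (hmeas.pow_const 2) 1 fun t ht => by
      have h1 := hrange t ht
      rw [abs_le]; constructor <;> nlinarith [h1.1, h1.2]
  have hIhχ : IntegrableOn (fun t => h t * χ t) (Icc (0:ℝ) 1) :=
    integrableOn_of_bdd (hmeas.mul hχmeas) 1 fun t ht => by
      have h1 := hrange t ht
      have ha : |h t| ≤ 1 := abs_le.2 ⟨by linarith [h1.1], h1.2⟩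
      have hb : |χ t| ≤ 1 := by simp only [hχdef]; split <;> simp
      calc |h t * χ t| = |h t| * |χ t| := abs_mul _ _
      _ ≤ 1 * 1 := mul_le_mul ha hb (abs_nonneg _) zero_le_one
      _ = 1 := mul_one 1
  have hIχ : IntegrableOn χ (Icc (0:ℝ) 1) :=
    integrableOn_of_bdd hχmeas 1 fun t _ => by simp only [hχdef]; split <;> simp
  have iih : IntervalIntegrable h volume 0 1 := ii_of_int hIh le_rfl le_rfl zero_le_one
  have iih2 : IntervalIntegrable (fun t => (h t)^2) volume 0 1 := ii_of_int hIh2 le_rfl le_rfl zero_le_one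
  have iihχ : IntervalIntegrable (fun t => h t * χ t) volume 0 1 := ii_of_int hIhχ le_rfl le_rfl zero_le_one
  have iiχ : IntervalIntegrable χ volume 0 1 := ii_of_int hIχ le_rfl le_rfl zero_le_one
  have hEχ : (∫ t in (0:ℝ)..1, χ t) = v := by
    rw [← intervalIntegral.integral_add_adjacent_intervals
      (ii_of_int hIχ le_rfl hv1 hv0) (ii_of_int hIχ hv0 le_rfl hv1)]
    have e1 : (∫ t in (0:ℝ)..v, χ t) = v := by
      rw [intervalIntegral.integral_congr (g := fun _ => (1:ℝ)) fun t ht => by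
        rw [uIcc_of_le hv0] at ht; simp [hχdef, ht.2]]
      simp
    have e2 : (∫ t in v..(1:ℝ), χ t) = 0 := by
      rw [intervalIntegral.integral_congr_ae (g := fun _ => (0:ℝ))
        (ae_of_all _ fun t ht => ?_), intervalIntegral.integral_zero]
      rw [uIoc_of_le hv1] at ht
      simp [hχdef, not_le.2 ht.1]
    rw [e1, e2, add_zero]
  have hEhχ : (∫ t in (0:ℝ)..1, h t * χ t) = ∫ t in (0:ℝ)..v, h t := by
    rw [← intervalIntegral.integral_add_adjacent_intervals
      (ii_of_int hIhχ le_rfl hv1 hv0) (ii_of_int hIhχ hv0 le_rfl hv1)]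
    have e1 : (∫ t in (0:ℝ)..v, h t * χ t) = ∫ t in (0:ℝ)..v, h t :=
      intervalIntegral.integral_congr fun t ht => by
        rw [uIcc_of_le hv0] at ht; simp [hχdef, ht.2]
    have e2 : (∫ t in v..(1:ℝ), h t * χ t) = 0 := by
      rw [intervalIntegral.integral_congr_ae (g := fun _ => (0:ℝ))
        (ae_of_all _ fun t ht => ?_), intervalIntegral.integral_zero]
      rw [uIoc_of_le hv1] at ht
      simp [hχdef, not_le.2 ht.1]
    rw [e1, e2, add_zero]
  have key : (∫ t in (0:ℝ)..1, (h t - α) * (χ t - h t))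
      = (∫ t in (0:ℝ)..v, h t) - ∫ t in (0:ℝ)..1, (h t)^2 := by
    have expand : ∀ t, (h t - α) * (χ t - h t)
        = (h t * χ t - (h t)^2) - α * (χ t - h t) := fun t => by ring
    rw [intervalIntegral.integral_congr (g := fun t => (h t * χ t - (h t)^2) - α * (χ t - h t))
      fun t _ => expand t]
    rw [intervalIntegral.integral_sub (iihχ.sub iih2) ((iiχ.sub iih).const_mul α),
      intervalIntegral.integral_sub iihχ iih2, intervalIntegral.integral_const_mul,
      intervalIntegral.integral_sub iiχ iih, hEhχ, hEχ, hint]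
    ring
  have hnn : ∀ t ∈ Icc (0:ℝ) 1, 0 ≤ (h t - α) * (χ t - h t) := by
    intro t ht
    rcases le_or_gt t v with htv | hvt
    · have h1 : α ≤ h t := hanti ht ⟨hv0, hv1⟩ htv
      have h2 : h t ≤ 1 := (hrange t ht).2
      have hc : χ t = 1 := by simp only [hχdef]; exact if_pos htv
      rw [hc]
      exact mul_nonneg (by linarith) (by linarith)
    · have h1 : h t ≤ α := hanti ⟨hv0, hv1⟩ ht hvt.le
      have h2 : 0 ≤ h t := (hrange t ht).1
      have hc : χ t = 0 := by simp only [hχdef]; exact if_neg (not_le.2 hvt)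
      rw [hc]
      nlinarith
  have hD : 0 ≤ (∫ t in (0:ℝ)..v, h t) - ∫ t in (0:ℝ)..1, (h t)^2 := by
    rw [← key]; exact intervalIntegral.integral_nonneg zero_le_one hnn
  refine ⟨by linarith, ?_, ?_⟩
  · -- equality → two-level form
    intro heq
    have hFint : Integrable (fun t => (h t - α) * (χ t - h t)) (volume.restrict (Icc (0:ℝ) 1)) := by
      refine integrableOn_of_bdd ((hmeas.sub measurable_const).mul (hχmeas.sub hmeas)) 4
        fun t ht => ?_
      have h1 := hrange t ht
      have hχt : χ t = 0 ∨ χ t = 1 := by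
        simp only [hχdef]; split; exacts [Or.inr rfl, Or.inl rfl]
      rw [abs_le]
      rcases hχt with hc | hc <;> rw [hc] <;> constructor <;> nlinarith [h1.1, h1.2]
    have hzero : (∫ t in (0:ℝ)..1, (h t - α) * (χ t - h t)) = 0 := by
      rw [key]; linarith
    have hres : volume.restrict (Ioc (0:ℝ) 1) = volume.restrict (Icc (0:ℝ) 1) :=
      Measure.restrict_congr_set Ioc_ae_eq_Icc
    have hzero' : (∫ t, (h t - α) * (χ t - h t) ∂(volume.restrict (Icc (0:ℝ) 1))) = 0 := by
      rw [← hres]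
      rw [intervalIntegral.integral_of_le zero_le_one] at hzero
      exact hzero
    have hnnae : 0 ≤ᵐ[volume.restrict (Icc (0:ℝ) 1)] fun t => (h t - α) * (χ t - h t) := by
      filter_upwards [ae_restrict_mem measurableSet_Icc] with t ht using hnn t ht
    have hzae := (integral_eq_zero_iff_of_nonneg_ae hnnae hFint).1 hzero'
    have hdich : ∀ᵐ t ∂(volume.restrict (Icc (0:ℝ) 1)), h t = α ∨ h t = χ t := by
      filter_upwards [hzae] with t ht
      have ht' : (h t - α) * (χ t - h t) = 0 := ht
      rcases mul_eq_zero.1 ht' with h' | h'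
      · exact Or.inl (by linarith [sub_eq_zero.1 h'])
      · exact Or.inr (sub_eq_zero.1 h').symm
    set S1 := {t ∈ Icc (0:ℝ) 1 | h t ≤ α} with hS1
    set S2 := {t ∈ Icc (0:ℝ) 1 | α ≤ h t} with hS2
    have hvS1 : v ∈ S1 := ⟨⟨hv0, hv1⟩, le_rfl⟩
    have hvS2 : v ∈ S2 := ⟨⟨hv0, hv1⟩, le_rfl⟩
    have hbdd1 : BddBelow S1 := ⟨0, fun x hx => hx.1.1⟩
    have hbdd2 : BddAbove S2 := ⟨1, fun x hx => hx.1.2⟩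
    set A := sInf S1 with hAdef
    set B := sSup S2 with hBdef
    have hA0 : 0 ≤ A := le_csInf ⟨v, hvS1⟩ fun x hx => hx.1.1
    have hAv : A ≤ v := csInf_le hbdd1 hvS1
    have hvB : v ≤ B := le_csSup hbdd2 hvS2
    have hB1 : B ≤ 1 := csSup_le ⟨v, hvS2⟩ fun x hx => hx.1.2
    have hAB : A ≤ B := hAv.trans hvB
    have hmid : ∀ t, A < t → t < B → h t = α := by
      intro t h1 h2
      have ht01 : t ∈ Icc (0:ℝ) 1 := ⟨hA0.trans h1.le, h2.le.trans hB1⟩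
      obtain ⟨s, hs, hst⟩ := exists_lt_of_csInf_lt ⟨v, hvS1⟩ h1
      obtain ⟨s', hs', hts'⟩ := exists_lt_of_lt_csSup ⟨v, hvS2⟩ h2
      have u1 : h t ≤ α := le_trans (hanti hs.1 ht01 hst.le) hs.2
      have u2 : α ≤ h t := le_trans hs'.2 (hanti ht01 hs'.1 hts'.le)
      linarith
    have hlow : ∀ t ∈ Icc (0:ℝ) 1, t < A → α < h t := by
      intro t ht h1
      by_contra hc
      exact absurd (csInf_le hbdd1 ⟨ht, not_lt.1 hc⟩) (not_le.2 h1)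
    have hhigh : ∀ t ∈ Icc (0:ℝ) 1, B < t → h t < α := by
      intro t ht h1
      by_contra hc
      exact absurd (le_csSup hbdd2 ⟨ht, not_lt.1 hc⟩) (not_le.2 h1)
    have hform : ∀ᵐ t ∂(volume.restrict (Icc (0:ℝ) 1)),
        h t = (if t < A then (1:ℝ) else 0) + α * (if t ∈ Ioo A B then (1:ℝ) else 0) := by
      filter_upwards [hdich, ae_restrict_mem measurableSet_Icc,
        ae_restrict_of_ae (ae_ne_vol A), ae_restrict_of_ae (ae_ne_vol B)] with t hd ht htA htB
      rcases lt_trichotomy t A with h1 | h1 | h1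
      · have hni : t ∉ Ioo A B := fun hio => absurd hio.1 (not_lt.2 h1.le)
        rw [if_pos h1, if_neg hni, mul_zero, add_zero]
        have hgt : α < h t := hlow t ht h1
        have hd1 : h t = χ t := hd.resolve_left (ne_of_gt hgt)
        rcases le_or_gt t v with hc | hc
        · rw [hd1]; simp only [hχdef]; exact if_pos hc
        · exfalso
          rw [hd1] at hgt
          simp only [hχdef, if_neg (not_le.2 hc)] at hgt
          linarith
      · exact absurd h1 htA
      · rcases lt_trichotomy t B with h2 | h2 | h2
        · have hmem : t ∈ Ioo A B := ⟨h1, h2⟩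
          simp only [if_neg (not_lt.2 h1.le), if_pos hmem, mul_one, zero_add]
          exact hmid t h1 h2
        · exact absurd h2 htB
        · have hlt : h t < α := hhigh t ht h2
          have hd1 : h t = χ t := hd.resolve_left (ne_of_lt hlt)
          have hni : t ∉ Ioo A B := fun hio => absurd hio.2 (not_lt.2 h2.le)
          rw [if_neg (not_lt.2 (hAB.trans h2.le)), if_neg hni, mul_zero, add_zero]
          rcases le_or_gt t v with hc | hc
          · exfalso
            rw [hd1] at hlt
            simp only [hχdef, if_pos hc] at hlt
            linarith
          · rw [hd1]; simp only [hχdef]; exact if_neg (not_le.2 hc)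
    have hABv : A + α * (B - A) = v := by
      have e : (∫ t in (0:ℝ)..1, h t) = A + α * (B - A) := by
        rw [interval_congr le_rfl le_rfl zero_le_one (g := tl A B α) hform]
        rw [tl_integral A B α 1 hA0 hAB (hAB.trans hB1), min_eq_right hB1]
      rw [hint] at e; exact e.symm
    exact ⟨A, B, α, hA0, hAB, hB1, ⟨hα0, hα1⟩, hABv, hform⟩
  · -- two-level form → equality
    rintro ⟨A, B, β, hA0, hAB, hB1, ⟨hβ0, hβ1⟩, hABv, hae⟩
    have hAv : A ≤ v := by nlinarith
    have hvB : v ≤ B := by nlinarith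
    have e1 : (∫ t in (0:ℝ)..1, (h t)^2) = A + β^2 * (B - A) := by
      rw [interval_congr le_rfl le_rfl zero_le_one (g := tl A B (β^2)) ?_]
      · rw [tl_integral A B (β^2) 1 hA0 hAB (hAB.trans hB1), min_eq_right hB1]
      · filter_upwards [hae] with t ht
        rw [show ((if t < A then (1:ℝ) else 0) + β * (if t ∈ Ioo A B then (1:ℝ) else 0))
            = tl A B β t from rfl] at ht
        rw [ht, tl_sq A B β hAB]
    have e2 : (∫ t in (0:ℝ)..v, h t) = A + β * (v - A) := by
      rw [interval_congr le_rfl hv1 hv0 (g := tl A B β) hae]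
      rw [tl_integral A B β v hA0 hAB hAv, min_eq_left hvB]
    rw [e1, e2]
    have hv' : v - A = β * (B - A) := by linarith
    rw [hv']
    ring
end
end

section
/- Define h : [0,1]² → [0,1] by h(t,v) = 𝟙_{t < v/2} + v·𝟙_{(v/2,(v+1)/2)}(t). Then C(u,v) := ∫₀ᵘ h(t,v) dt is a stochastically increasing bivariate copula with ξ(C) = ψ(C), and C is not symmetric, i.e. there exist (u,v) with C(u,v) ≠ C(v,u). -/
open MeasureTheory Set

noncomputable section

/-- The function `h(t,v) = 𝟙_{t < v/2} + v·𝟙_{(v/2,(v+1)/2)}(t)`. -/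
def hAsym (t v : ℝ) : ℝ :=
  (if t < v / 2 then (1:ℝ) else 0) + v * (if t ∈ Ioo (v / 2) ((v + 1) / 2) then (1:ℝ) else 0)

/-- The copula `C(u,v) = ∫₀ᵘ h(t,v) dt` induced by `hAsym`. -/
def CAsym (u v : ℝ) : ℝ := ∫ t in (0:ℝ)..u, hAsym t v

/-!
Off the single point `t = v / 2`, `h(·, v)` is the step function `g(v, ·)` taking the values
`1, v, 0` on `[0, v/2)`, `[v/2, (v+1)/2)`, `[(v+1)/2, 1]`. It is antitone in `t`, which makes
`C(·, v)` piecewise linear with `∂₁C = g` a.e. (so `C` is SI), and monotone in `v`, which makes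
`C` 2-increasing. Moreover `∫₀¹ g(v,t)² dt = v/2 + v²/2 = C(v,v)`, so the integrands of `ξ` and
`ψ` coincide. Finally `C(1/2, 1/4) = 7/32 ≠ 1/4 = C(1/4, 1/2)`.
-/

lemma intervalIntegral.integral_eq_mul_sub_of_eqOn_uIoo {f : ℝ → ℝ} {a b c : ℝ}
    (h : EqOn f (fun _ => c) (uIoo a b)) : ∫ t in a..b, f t = c * (b - a) := by
  have hae : ∀ᵐ t ∂volume, t ∈ uIoc a b → f t = c := by
    filter_upwards [(countable_singleton (max a b)).ae_notMem volume] with t hmax ht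
    exact h ⟨ht.1, lt_of_le_of_ne ht.2 hmax⟩
  rw [intervalIntegral.integral_congr_ae hae, intervalIntegral.integral_const, smul_eq_mul,
    mul_comm]

lemma isCopula_of_margins_of_twoIncreasing {C : ℝ → ℝ → ℝ}
    (hmargin₁ : ∀ u ∈ Icc (0:ℝ) 1, C u 0 = 0 ∧ C u 1 = u)
    (hmargin₂ : ∀ v ∈ Icc (0:ℝ) 1, C 0 v = 0 ∧ C 1 v = v)
    (hrect : ∀ u₁ ∈ Icc (0:ℝ) 1, ∀ u₂ ∈ Icc (0:ℝ) 1, ∀ v₁ ∈ Icc (0:ℝ) 1, ∀ v₂ ∈ Icc (0:ℝ) 1,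
      u₁ ≤ u₂ → v₁ ≤ v₂ → 0 ≤ C u₂ v₂ - C u₁ v₂ - C u₂ v₁ + C u₁ v₁) :
    IsCopula C := by
  have h₀ : (0:ℝ) ∈ Icc (0:ℝ) 1 := left_mem_Icc.2 zero_le_one
  have h₁ : (1:ℝ) ∈ Icc (0:ℝ) 1 := right_mem_Icc.2 zero_le_one
  refine ⟨fun u hu v hv => ⟨?_, ?_⟩, hmargin₁, hmargin₂, hrect⟩
  · have := hrect 0 h₀ u hu 0 h₀ v hv hu.1 hv.1
    linarith [(hmargin₁ u hu).1, (hmargin₂ v hv).1, (hmargin₂ 0 h₀).1]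
  · have := hrect 0 h₀ u hu v hv 1 h₁ hu.1 hv.2
    linarith [(hmargin₁ u hu).2, (hmargin₂ v hv).1, (hmargin₂ 1 h₁).1, hu.2]

/-- `hAsym` with its value at `t = v / 2` changed, so that it is antitone in `t`. -/
def gAsym (v t : ℝ) : ℝ := if t < v / 2 then 1 else if t < (v + 1) / 2 then v else 0

lemma hAsym_eq_gAsym {t v : ℝ} (ht : t ≠ v / 2) : hAsym t v = gAsym v t := by
  unfold hAsym gAsym
  rcases ht.lt_or_gt with h | h
  · have : t ∉ Ioo (v / 2) ((v + 1) / 2) := fun h' => h'.1.not_gt h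
    simp [h, this]
  · by_cases h' : t < (v + 1) / 2
    · simp [h.not_gt, h', h]
    · have : ¬ t < v / 2 := by linarith
      simp [this, h']

lemma gAsym_nonneg {v : ℝ} (hv : 0 ≤ v) (t : ℝ) : 0 ≤ gAsym v t := by
  unfold gAsym
  split_ifs <;> linarith

lemma gAsym_antitone {v : ℝ} (hv : v ∈ Icc (0:ℝ) 1) : Antitone (gAsym v) := by
  intro a b hab
  unfold gAsym
  split_ifs <;> linarith [hv.1, hv.2]

lemma gAsym_sq_antitone {v : ℝ} (hv : v ∈ Icc (0:ℝ) 1) :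
    Antitone (fun t => gAsym v t ^ 2) := fun _ _ hab =>
  pow_le_pow_left₀ (gAsym_nonneg hv.1 _) (gAsym_antitone hv hab) 2

lemma gAsym_mono_left {v₁ v₂ : ℝ} (hv₁ : 0 ≤ v₁) (hv₂ : v₂ ≤ 1) (h : v₁ ≤ v₂) (t : ℝ) :
    gAsym v₁ t ≤ gAsym v₂ t := by
  unfold gAsym
  split_ifs <;> linarith

lemma CAsym_eq_integral_gAsym (u v : ℝ) : CAsym u v = ∫ t in (0:ℝ)..u, gAsym v t := by
  refine intervalIntegral.integral_congr_ae ?_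
  filter_upwards [(countable_singleton (v / 2)).ae_notMem volume] with t ht _
  exact hAsym_eq_gAsym ht

lemma gAsym_intervalIntegrable {v : ℝ} (hv : v ∈ Icc (0:ℝ) 1) (a b : ℝ) :
    IntervalIntegrable (gAsym v) volume a b :=
  (gAsym_antitone hv).intervalIntegrable

lemma CAsym_sub_CAsym {v : ℝ} (hv : v ∈ Icc (0:ℝ) 1) (u₁ u₂ : ℝ) :
    CAsym u₂ v - CAsym u₁ v = ∫ t in u₁..u₂, gAsym v t := by
  simp only [CAsym_eq_integral_gAsym]
  exact intervalIntegral.integral_interval_sub_left (gAsym_intervalIntegrable hv _ _)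
    (gAsym_intervalIntegrable hv _ _)

lemma CAsym_of_le_half {u v : ℝ} (hv : 0 ≤ v) (hu : u ≤ v / 2) : CAsym u v = u := by
  rw [CAsym_eq_integral_gAsym, intervalIntegral.integral_eq_mul_sub_of_eqOn_uIoo (c := 1),
    one_mul, sub_zero]
  intro t ht
  have : t < v / 2 := ht.2.trans_le (max_le (by linarith) hu)
  simp [gAsym, this]

lemma CAsym_of_mem_Icc {u v : ℝ} (hv : v ∈ Icc (0:ℝ) 1) (h₁ : v / 2 ≤ u)
    (h₂ : u ≤ (v + 1) / 2) : CAsym u v = v / 2 + v * (u - v / 2) := by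
  have hpiece : ∫ t in (v / 2)..u, gAsym v t = v * (u - v / 2) := by
    refine intervalIntegral.integral_eq_mul_sub_of_eqOn_uIoo fun t ht => ?_
    rw [uIoo_of_le h₁] at ht
    have h₃ : t < (v + 1) / 2 := ht.2.trans_le h₂
    simp [gAsym, ht.1.not_gt, h₃]
  linarith [CAsym_sub_CAsym hv (v / 2) u, CAsym_of_le_half hv.1 le_rfl]

lemma CAsym_of_ge {u v : ℝ} (hv : v ∈ Icc (0:ℝ) 1) (hu : (v + 1) / 2 ≤ u) : CAsym u v = v := by
  have hmid : CAsym ((v + 1) / 2) v = v := by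
    rw [CAsym_of_mem_Icc hv (by linarith) le_rfl]; ring
  have hpiece : ∫ t in ((v + 1) / 2)..u, gAsym v t = 0 * (u - (v + 1) / 2) := by
    refine intervalIntegral.integral_eq_mul_sub_of_eqOn_uIoo fun t ht => ?_
    rw [uIoo_of_le hu] at ht
    have : ¬ t < v / 2 := by linarith [ht.1]
    simp [gAsym, this, ht.1.not_gt]
  linarith [CAsym_sub_CAsym hv ((v + 1) / 2) u]

lemma CAsym_zero_left (v : ℝ) : CAsym 0 v = 0 :=
  intervalIntegral.integral_same

lemma CAsym_one_left {v : ℝ} (hv : v ∈ Icc (0:ℝ) 1) : CAsym 1 v = v :=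
  CAsym_of_ge hv (by linarith [hv.2])

lemma CAsym_zero_right {u : ℝ} (hu : 0 ≤ u) : CAsym u 0 = 0 := by
  rw [CAsym_eq_integral_gAsym, intervalIntegral.integral_eq_mul_sub_of_eqOn_uIoo (c := 0),
    zero_mul]
  intro t ht
  have : 0 < t := (le_min le_rfl hu).trans_lt ht.1
  simp [gAsym, this.not_gt]

lemma CAsym_one_right {u : ℝ} (hu : u ≤ 1) : CAsym u 1 = u := by
  rw [CAsym_eq_integral_gAsym, intervalIntegral.integral_eq_mul_sub_of_eqOn_uIoo (c := 1),
    one_mul, sub_zero]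
  intro t ht
  have : t < 1 := ht.2.trans_le (max_le zero_le_one hu)
  simp [gAsym, this]

lemma hasDerivAt_CAsym {v t : ℝ} (hv : v ∈ Icc (0:ℝ) 1) (h₁ : t ≠ v / 2)
    (h₂ : t ≠ (v + 1) / 2) : HasDerivAt (CAsym · v) (gAsym v t) t := by
  rcases h₁.lt_or_gt with h₁ | h₁
  · have hev : (CAsym · v) =ᶠ[nhds t] id :=
      eventually_lt_nhds h₁ |>.mono fun s hs => CAsym_of_le_half hv.1 hs.le
    simpa [gAsym, h₁] using (hasDerivAt_id t).congr_of_eventuallyEq hev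
  rcases h₂.lt_or_gt with h₂ | h₂
  · have hev : (CAsym · v) =ᶠ[nhds t] fun s => v / 2 + v * (s - v / 2) := by
      filter_upwards [Ioo_mem_nhds h₁ h₂] with s hs
      exact CAsym_of_mem_Icc hv hs.1.le hs.2.le
    have hlin : HasDerivAt (fun s => v / 2 + v * (s - v / 2)) v t := by
      simpa using (((hasDerivAt_id t).sub_const (v / 2)).const_mul v).const_add (v / 2)
    simpa [gAsym, h₁.not_gt, h₂] using hlin.congr_of_eventuallyEq hev
  · have hev : (CAsym · v) =ᶠ[nhds t] fun _ => v :=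
      eventually_gt_nhds h₂ |>.mono fun s hs => CAsym_of_ge hv hs.le
    have : ¬ t < v / 2 := by linarith
    simpa [gAsym, this, h₂.not_gt] using (hasDerivAt_const t v).congr_of_eventuallyEq hev

lemma d1_CAsym_ae_eq {v : ℝ} (hv : v ∈ Icc (0:ℝ) 1) :
    (fun t => d1 CAsym t v) =ᵐ[volume] gAsym v := by
  filter_upwards [((toFinite {v / 2, (v + 1) / 2}).countable).ae_notMem volume] with t ht
  simp only [mem_insert_iff, mem_singleton_iff, not_or] at ht
  exact (hasDerivAt_CAsym hv ht.1 ht.2).deriv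

lemma integral_gAsym_sq {v : ℝ} (hv : v ∈ Icc (0:ℝ) 1) :
    ∫ t in (0:ℝ)..1, gAsym v t ^ 2 = v / 2 + v ^ 2 / 2 := by
  have hint : ∀ a b, IntervalIntegrable (fun t => gAsym v t ^ 2) volume a b :=
    fun _ _ => (gAsym_sq_antitone hv).intervalIntegrable
  have h₁ : ∫ t in (0:ℝ)..(v / 2), gAsym v t ^ 2 = 1 * (v / 2 - 0) := by
    refine intervalIntegral.integral_eq_mul_sub_of_eqOn_uIoo fun t ht => ?_
    have : t < v / 2 := ht.2.trans_le (max_le (by linarith [hv.1]) le_rfl)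
    simp [gAsym, this]
  have h₂ : ∫ t in (v / 2)..((v + 1) / 2), gAsym v t ^ 2 = v ^ 2 * ((v + 1) / 2 - v / 2) := by
    refine intervalIntegral.integral_eq_mul_sub_of_eqOn_uIoo fun t ht => ?_
    rw [uIoo_of_le (by linarith)] at ht
    simp [gAsym, ht.1.not_gt, ht.2]
  have h₃ : ∫ t in ((v + 1) / 2)..1, gAsym v t ^ 2 = 0 * (1 - (v + 1) / 2) := by
    refine intervalIntegral.integral_eq_mul_sub_of_eqOn_uIoo fun t ht => ?_
    rw [uIoo_of_le (by linarith [hv.2])] at ht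
    have : ¬ t < v / 2 := by linarith [ht.1]
    simp [gAsym, this, ht.1.not_gt]
  rw [← intervalIntegral.integral_add_adjacent_intervals (hint 0 ((v + 1) / 2)) (hint _ 1),
    ← intervalIntegral.integral_add_adjacent_intervals (hint 0 (v / 2)) (hint _ _), h₁, h₂, h₃]
  ring

lemma integral_d1_CAsym_sq {v : ℝ} (hv : v ∈ Icc (0:ℝ) 1) :
    ∫ t in (0:ℝ)..1, d1 CAsym t v ^ 2 = CAsym v v := by
  have hae : ∀ᵐ t, t ∈ uIoc 0 1 → d1 CAsym t v ^ 2 = gAsym v t ^ 2 :=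
    (d1_CAsym_ae_eq hv).mono fun t ht _ => congrArg (· ^ 2) ht
  rw [intervalIntegral.integral_congr_ae hae, integral_gAsym_sq hv,
    CAsym_of_mem_Icc hv (by linarith [hv.1]) (by linarith [hv.2])]
  ring

lemma xi_CAsym_eq_psi_CAsym : xi CAsym = psi CAsym := by
  rw [xi, psi, intervalIntegral.integral_congr fun v hv => integral_d1_CAsym_sq ?_]
  rwa [uIcc_of_le zero_le_one] at hv

lemma isCopula_CAsym : IsCopula CAsym := by
  refine isCopula_of_margins_of_twoIncreasing
    (fun u hu => ⟨CAsym_zero_right hu.1, CAsym_one_right hu.2⟩)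
    (fun v hv => ⟨CAsym_zero_left v, CAsym_one_left hv⟩)
    (fun u₁ _ u₂ _ v₁ hv₁ v₂ hv₂ hu hv => ?_)
  have := intervalIntegral.integral_mono_on hu (gAsym_intervalIntegrable hv₁ u₁ u₂)
    (gAsym_intervalIntegrable hv₂ u₁ u₂) fun t _ => gAsym_mono_left hv₁.1 hv₂.2 hv t
  linarith [CAsym_sub_CAsym hv₁ u₁ u₂, CAsym_sub_CAsym hv₂ u₁ u₂]

lemma isSI_CAsym : IsSI CAsym := fun v hv =>
  ⟨gAsym v, (gAsym_antitone hv).antitoneOn _, ae_restrict_of_ae (d1_CAsym_ae_eq hv)⟩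

lemma CAsym_half_quarter_ne : CAsym (1 / 2) (1 / 4) ≠ CAsym (1 / 4) (1 / 2) := by
  rw [CAsym_of_mem_Icc (by norm_num) (by norm_num) (by norm_num),
    CAsym_of_le_half (by norm_num) (by norm_num)]
  norm_num

/-- `CAsym` is a stochastically increasing bivariate copula with
`ξ(C) = ψ(C)` that is not symmetric. -/
theorem CAsym_si_xi_eq_psi_not_symmetric :
    IsCopula CAsym ∧ IsSI CAsym ∧ xi CAsym = psi CAsym ∧
    ∃ u ∈ Icc (0:ℝ) 1, ∃ v ∈ Icc (0:ℝ) 1, CAsym u v ≠ CAsym v u :=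
  ⟨isCopula_CAsym, isSI_CAsym, xi_CAsym_eq_psi_CAsym,
    1 / 2, by norm_num, 1 / 4, by norm_num, CAsym_half_quarter_ne⟩
end
end

section
/- Fix μ ∈ [0,2] and set v₀ = μ/(2+μ), v₁ = 2/(2+μ). Define (h₁,h₂)(v) = (0, v/(1−v)) for v ∈ [0,v₀], (v − (μ/2)(1−v), v + (μ/2)v) for v ∈ (v₀,v₁], and (2 − 1/v, 1) for v ∈ (v₁,1], and set h_μ(t,v) := h₁(v)·𝟙_{t≤v} + h₂(v)·𝟙_{t>v}. Then 6∫₀¹∫₀¹ 𝟙_{t≤v}·h_μ(t,v) dt dv − 2 = −2v₁² + 6v₁ − 5 + 1/v₁, and 6∫₀¹∫₀¹ h_μ(t,v)² dt dv − 2 = −4v₁² + 20v₁ − 17 + 2/v₁ − 1/v₁² − 12·ln(v₁). -/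
open MeasureTheory Set

noncomputable section

/-- `h₁(v)` of the family `C↘_μ`. -/
def hOne (μ v : ℝ) : ℝ :=
  if v ≤ μ / (2 + μ) then 0
  else if v ≤ 2 / (2 + μ) then v - μ / 2 * (1 - v)
  else 2 - 1 / v

/-- `h₂(v)` of the family `C↘_μ`. -/
def hTwo (μ v : ℝ) : ℝ :=
  if v ≤ μ / (2 + μ) then v / (1 - v)
  else if v ≤ 2 / (2 + μ) then v + μ / 2 * v
  else 1

/-- `h_μ(t,v) = h₁(v)·𝟙_{t ≤ v} + h₂(v)·𝟙_{t > v}`. -/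
def hMu (μ t v : ℝ) : ℝ := if t ≤ v then hOne μ v else hTwo μ v

/-!
For fixed `v`, `t ↦ h_μ(t,v)` is a step function with its jump at `t = v`, so the inner integrals
are `v·h₁(v)` and `v·h₁(v)² + (1-v)·h₂(v)²`. These are elementary in each regime of `v`:
`0` resp. `v²/(1-v)` below `v₀`, quadratics between `v₀` and `v₁`, and `2v - 1` resp.
`3v - 3 + 1/v` above `v₁`.
The logarithms come from `∫₀^{v₀} 1/(1-v)` and `∫_{v₁}^1 1/v`, both equal to `-log v₁`
because `1 - v₀ = v₁`.
-/

open scoped Interval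

section PiecewiseIntegral

variable {E : Type*} [NormedAddCommGroup E] [NormedSpace ℝ E] {ν : Measure ℝ} [NullSingletonClass ν]
  {f g₁ g₂ g₃ : ℝ → E} {a b c d : ℝ}

theorem integral_eq_add_of_eqOn_Ioo (hab : a ≤ b) (hbc : b ≤ c)
    (h₁ : EqOn f g₁ (Ioo a b)) (h₂ : EqOn f g₂ (Ioo b c))
    (hg₁ : IntervalIntegrable g₁ ν a b) (hg₂ : IntervalIntegrable g₂ ν b c) :
    ∫ x in a..c, f x ∂ν = (∫ x in a..b, g₁ x ∂ν) + ∫ x in b..c, g₂ x ∂ν := by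
  have hf₁ := (intervalIntegrable_congr_uIoo (uIoo_of_le hab ▸ h₁)).2 hg₁
  have hf₂ := (intervalIntegrable_congr_uIoo (uIoo_of_le hbc ▸ h₂)).2 hg₂
  rw [← intervalIntegral.integral_add_adjacent_intervals hf₁ hf₂,
    intervalIntegral.integral_congr_Ioo_of_le hab h₁,
    intervalIntegral.integral_congr_Ioo_of_le hbc h₂]

theorem integral_eq_add_add_of_eqOn_Ioo (hab : a ≤ b) (hbc : b ≤ c) (hcd : c ≤ d)
    (h₁ : EqOn f g₁ (Ioo a b)) (h₂ : EqOn f g₂ (Ioo b c)) (h₃ : EqOn f g₃ (Ioo c d))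
    (hg₁ : IntervalIntegrable g₁ ν a b) (hg₂ : IntervalIntegrable g₂ ν b c)
    (hg₃ : IntervalIntegrable g₃ ν c d) :
    ∫ x in a..d, f x ∂ν =
      (∫ x in a..b, g₁ x ∂ν) + (∫ x in b..c, g₂ x ∂ν) + ∫ x in c..d, g₃ x ∂ν := by
  have hf₁ := (intervalIntegrable_congr_uIoo (uIoo_of_le hab ▸ h₁)).2 hg₁
  have hf₂ := (intervalIntegrable_congr_uIoo (uIoo_of_le hbc ▸ h₂)).2 hg₂
  rw [integral_eq_add_of_eqOn_Ioo (hab.trans hbc) hcd (fun _ _ => rfl) h₃ (hf₁.trans hf₂) hg₃,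
    integral_eq_add_of_eqOn_Ioo hab hbc h₁ h₂ hg₁ hg₂]

end PiecewiseIntegral

theorem integral_ite_le (c₁ c₂ : ℝ) {a b v : ℝ} (hav : a ≤ v) (hvb : v ≤ b) :
    ∫ t in a..b, (if t ≤ v then c₁ else c₂) = (v - a) * c₁ + (b - v) * c₂ := by
  rw [integral_eq_add_of_eqOn_Ioo hav hvb (g₁ := fun _ => c₁) (g₂ := fun _ => c₂)
    (fun t ht => if_pos ht.2.le) (fun t ht => if_neg (not_le.2 ht.1))
    intervalIntegrable_const intervalIntegrable_const]
  simp

theorem intervalIntegrable_one_div_self {a b : ℝ} (h : (0 : ℝ) ∉ [[a, b]]) :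
    IntervalIntegrable (fun x : ℝ => 1 / x) volume a b :=
  intervalIntegral.intervalIntegrable_one_div (fun _ hx hx0 => h (hx0 ▸ hx)) continuousOn_id

theorem intervalIntegrable_sq_div_one_sub {a b : ℝ} (h : (1 : ℝ) ∉ [[a, b]]) :
    IntervalIntegrable (fun x : ℝ => x ^ 2 / (1 - x)) volume a b :=
  ((continuousOn_pow 2).div (by fun_prop)
    fun x hx hx0 => h (by rwa [← sub_eq_zero.1 hx0] at hx)).intervalIntegrable

theorem integral_mul_sq_add_mul (c d a b : ℝ) :
    ∫ x in a..b, (c * x ^ 2 + d * x) = c * ((b ^ 3 - a ^ 3) / 3) + d * ((b ^ 2 - a ^ 2) / 2) := by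
  rw [intervalIntegral.integral_add
    ((by fun_prop : Continuous fun x : ℝ => c * x ^ 2).intervalIntegrable a b)
    ((by fun_prop : Continuous fun x : ℝ => d * x).intervalIntegrable a b),
    intervalIntegral.integral_const_mul, intervalIntegral.integral_const_mul, integral_pow,
    integral_id]
  norm_num

theorem integral_mul_sub (c d a b : ℝ) :
    ∫ x in a..b, (c * x - d) = c * ((b ^ 2 - a ^ 2) / 2) - d * (b - a) := by
  rw [intervalIntegral.integral_sub
    ((by fun_prop : Continuous fun x : ℝ => c * x).intervalIntegrable a b) intervalIntegrable_const,
    intervalIntegral.integral_const_mul, integral_id, intervalIntegral.integral_const, smul_eq_mul,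
    mul_comm (b - a)]

theorem integral_mul_sub_add_one_div (c d : ℝ) {a b : ℝ} (h : (0 : ℝ) ∉ [[a, b]]) :
    ∫ x in a..b, (c * x - d + 1 / x) =
      c * ((b ^ 2 - a ^ 2) / 2) - d * (b - a) + Real.log (b / a) := by
  rw [intervalIntegral.integral_add
    ((by fun_prop : Continuous fun x : ℝ => c * x - d).intervalIntegrable a b)
    (intervalIntegrable_one_div_self h), integral_mul_sub, integral_one_div h]

theorem integral_sq_div_one_sub {a b : ℝ} (h : (1 : ℝ) ∉ [[a, b]]) :
    ∫ x in a..b, x ^ 2 / (1 - x) =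
      (a - b) + (a ^ 2 - b ^ 2) / 2 + Real.log (1 - a) - Real.log (1 - b) := by
  have hne : ∀ x ∈ [[a, b]], 1 - x ≠ 0 := fun x hx hx0 => h (by rwa [← sub_eq_zero.1 hx0] at hx)
  rw [intervalIntegral.integral_eq_sub_of_hasDerivAt
    (f := fun x => -x - x ^ 2 / 2 - Real.log (1 - x)) (fun x hx => ?_)
    (intervalIntegrable_sq_div_one_sub h)]
  · ring
  refine (((hasDerivAt_id' x).neg.sub ((hasDerivAt_pow 2 x).div_const 2)).sub
    (((hasDerivAt_id' x).const_sub 1).log (hne x hx))).congr_deriv ?_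
  field_simp [hne x hx]
  ring

theorem hMu_breakpoints {μ : ℝ} (hμ : μ ∈ Icc (0:ℝ) 2) :
    0 ≤ μ / (2 + μ) ∧ μ / (2 + μ) < 1 ∧ μ / (2 + μ) ≤ 2 / (2 + μ) ∧ 0 < 2 / (2 + μ) ∧
      2 / (2 + μ) ≤ 1 := by
  obtain ⟨hμ0, hμ2⟩ := hμ
  have hs : 0 < 2 + μ := by linarith
  exact ⟨by positivity, (div_lt_one hs).2 (by linarith), div_le_div_of_nonneg_right hμ2 hs.le,
    by positivity, (div_le_one hs).2 (by linarith)⟩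

theorem one_sub_div_two_add {μ : ℝ} (hμ : 2 + μ ≠ 0) : 1 - μ / (2 + μ) = 2 / (2 + μ) := by
  field_simp
  ring

theorem hOne_of_le {μ v : ℝ} (hv : v ≤ μ / (2 + μ)) : hOne μ v = 0 := if_pos hv

theorem hTwo_of_le {μ v : ℝ} (hv : v ≤ μ / (2 + μ)) : hTwo μ v = v / (1 - v) := if_pos hv

theorem hOne_of_mem_Ioc {μ v : ℝ} (hv : v ∈ Ioc (μ / (2 + μ)) (2 / (2 + μ))) :
    hOne μ v = v - μ / 2 * (1 - v) := by
  rw [hOne, if_neg (not_le.2 hv.1), if_pos hv.2]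

theorem hTwo_of_mem_Ioc {μ v : ℝ} (hv : v ∈ Ioc (μ / (2 + μ)) (2 / (2 + μ))) :
    hTwo μ v = v + μ / 2 * v := by
  rw [hTwo, if_neg (not_le.2 hv.1), if_pos hv.2]

theorem hOne_of_lt {μ v : ℝ} (hv₀ : μ / (2 + μ) < v) (hv₁ : 2 / (2 + μ) < v) :
    hOne μ v = 2 - 1 / v := by
  rw [hOne, if_neg (not_le.2 hv₀), if_neg (not_le.2 hv₁)]

theorem hTwo_of_lt {μ v : ℝ} (hv₀ : μ / (2 + μ) < v) (hv₁ : 2 / (2 + μ) < v) : hTwo μ v = 1 := by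
  rw [hTwo, if_neg (not_le.2 hv₀), if_neg (not_le.2 hv₁)]

theorem integral_indicator_mul_hMu (μ : ℝ) {v : ℝ} (hv : v ∈ Icc (0:ℝ) 1) :
    ∫ t in (0:ℝ)..1, (if t ≤ v then (1:ℝ) else 0) * hMu μ t v = v * hOne μ v := by
  have h : ∀ t, (if t ≤ v then (1:ℝ) else 0) * hMu μ t v = if t ≤ v then hOne μ v else 0 := by
    intro t; by_cases ht : t ≤ v <;> simp [hMu, ht]
  simp only [h, integral_ite_le _ _ hv.1 hv.2]
  ring

theorem integral_hMu_sq (μ : ℝ) {v : ℝ} (hv : v ∈ Icc (0:ℝ) 1) :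
    ∫ t in (0:ℝ)..1, hMu μ t v ^ 2 = v * hOne μ v ^ 2 + (1 - v) * hTwo μ v ^ 2 := by
  simp only [hMu, apply_ite (· ^ 2), integral_ite_le _ _ hv.1 hv.2, sub_zero]

theorem integral_mul_hOne_eq_add {μ : ℝ} (hμ : μ ∈ Icc (0:ℝ) 2) :
    ∫ v in (0:ℝ)..1, v * hOne μ v =
      (∫ v in (μ / (2 + μ))..(2 / (2 + μ)), ((1 + μ / 2) * v ^ 2 + -(μ / 2) * v)) +
        ∫ v in (2 / (2 + μ))..1, (2 * v - 1) := by
  obtain ⟨hv₀, -, hv₀₁, hv₁_pos, hv₁⟩ := hMu_breakpoints hμ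
  rw [integral_eq_add_add_of_eqOn_Ioo hv₀ hv₀₁ hv₁ (g₁ := fun _ => 0)
    (fun v hv => by rw [hOne_of_le hv.2.le, mul_zero])
    (fun v hv => by rw [hOne_of_mem_Ioc ⟨hv.1, hv.2.le⟩]; ring)
    (fun v hv => by
      have : v ≠ 0 := (hv₁_pos.trans hv.1).ne'
      rw [hOne_of_lt (hv₀₁.trans_lt hv.1) hv.1]; field_simp)
    intervalIntegrable_const
    ((by fun_prop : Continuous fun v : ℝ =>
      (1 + μ / 2) * v ^ 2 + -(μ / 2) * v).intervalIntegrable _ _)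
    ((by fun_prop : Continuous fun v : ℝ => 2 * v - 1).intervalIntegrable _ _)]
  simp

theorem integral_mul_hOne_sq_add_mul_hTwo_sq_eq_add {μ : ℝ} (hμ : μ ∈ Icc (0:ℝ) 2) :
    ∫ v in (0:ℝ)..1, (v * hOne μ v ^ 2 + (1 - v) * hTwo μ v ^ 2) =
      (∫ v in (0:ℝ)..(μ / (2 + μ)), v ^ 2 / (1 - v)) +
        (∫ v in (μ / (2 + μ))..(2 / (2 + μ)), ((1 - (μ / 2) ^ 2) * v ^ 2 + (μ / 2) ^ 2 * v)) +
          ∫ v in (2 / (2 + μ))..1, (3 * v - 3 + 1 / v) := by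
  obtain ⟨hv₀, hv₀_lt_one, hv₀₁, hv₁_pos, hv₁⟩ := hMu_breakpoints hμ
  refine integral_eq_add_add_of_eqOn_Ioo hv₀ hv₀₁ hv₁
    (fun v hv => ?_) (fun v hv => ?_) (fun v hv => ?_)
    (intervalIntegrable_sq_div_one_sub (notMem_uIcc_of_gt one_pos hv₀_lt_one))
    ((by fun_prop : Continuous fun v : ℝ =>
      (1 - (μ / 2) ^ 2) * v ^ 2 + (μ / 2) ^ 2 * v).intervalIntegrable _ _)
    (((by fun_prop : Continuous fun v : ℝ => 3 * v - 3).intervalIntegrable _ _).add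
      (intervalIntegrable_one_div_self (notMem_uIcc_of_lt hv₁_pos one_pos)))
  · have : 1 - v ≠ 0 := by linarith [hv.2]
    rw [hOne_of_le hv.2.le, hTwo_of_le hv.2.le]
    field_simp
    ring
  · rw [hOne_of_mem_Ioc ⟨hv.1, hv.2.le⟩, hTwo_of_mem_Ioc ⟨hv.1, hv.2.le⟩]
    ring
  · have : v ≠ 0 := (hv₁_pos.trans hv.1).ne'
    rw [hOne_of_lt (hv₀₁.trans_lt hv.1) hv.1, hTwo_of_lt (hv₀₁.trans_lt hv.1) hv.1]
    field_simp
    ring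

/-- Closed forms of the `ψ`- and `ξ`-functionals of `h_μ` for `μ ∈ [0,2]`,
where `v₁ = 2/(2+μ)`. -/
theorem hMu_psi_xi_closed_form (μ : ℝ) (hμ : μ ∈ Icc (0:ℝ) 2) :
    (6 * (∫ v in (0:ℝ)..1, ∫ t in (0:ℝ)..1,
        (if t ≤ v then (1:ℝ) else 0) * hMu μ t v) - 2 =
      -2 * (2 / (2 + μ)) ^ 2 + 6 * (2 / (2 + μ)) - 5 + 1 / (2 / (2 + μ))) ∧
    (6 * (∫ v in (0:ℝ)..1, ∫ t in (0:ℝ)..1, (hMu μ t v) ^ 2) - 2 =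
      -4 * (2 / (2 + μ)) ^ 2 + 20 * (2 / (2 + μ)) - 17 + 2 / (2 / (2 + μ))
        - 1 / (2 / (2 + μ)) ^ 2 - 12 * Real.log (2 / (2 + μ))) := by
  obtain ⟨-, hv₀_lt_one, -, hv₁_pos, -⟩ := hMu_breakpoints hμ
  have hs : 2 + μ ≠ 0 := by linarith [hμ.1]
  have h_unit : ∀ v ∈ [[(0:ℝ), 1]], v ∈ Icc (0:ℝ) 1 := by simp
  rw [intervalIntegral.integral_congr fun v hv => integral_indicator_mul_hMu μ (h_unit v hv),
    intervalIntegral.integral_congr fun v hv => integral_hMu_sq μ (h_unit v hv),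
    integral_mul_hOne_eq_add hμ, integral_mul_hOne_sq_add_mul_hTwo_sq_eq_add hμ,
    integral_mul_sq_add_mul, integral_mul_sq_add_mul, integral_mul_sub,
    integral_sq_div_one_sub (notMem_uIcc_of_gt one_pos hv₀_lt_one),
    integral_mul_sub_add_one_div 3 3 (notMem_uIcc_of_lt hv₁_pos one_pos),
    one_sub_div_two_add hs, sub_zero, Real.log_one, one_div (2 / (2 + μ)), Real.log_inv]
  constructor <;> field_simp <;> ring
end
end

section
/- Fix μ ∈ [0,2] and v ∈ (0,1), and set v₀ = μ/(2+μ), v₁ = 2/(2+μ). The function f(h₁,h₂) = μ·v·h₁ + v·h₁² + (1−v)·h₂² restricted to the set {(h₁,h₂) ∈ [0,1]² : v·h₁ + (1−v)·h₂ = v} attains its minimum uniquely at (h₁*,h₂*) = (0, v/(1−v)) if v ∈ (0,v₀], (h₁*,h₂*) = (v − (μ/2)(1−v), v + (μ/2)v) if v ∈ (v₀,v₁], and (h₁*,h₂*) = (2 − 1/v, 1) if v ∈ (v₁,1). -/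
open MeasureTheory Set

noncomputable section

/-- Objective function `f(h₁,h₂) = μ·v·h₁ + v·h₁² + (1−v)·h₂²`. -/
def fObj (μ v : ℝ) (p : ℝ × ℝ) : ℝ := μ * v * p.1 + v * p.1 ^ 2 + (1 - v) * p.2 ^ 2

/-- Constraint set `{(h₁,h₂) ∈ [0,1]² : v·h₁ + (1−v)·h₂ = v}`. -/
def constraintSet (v : ℝ) : Set (ℝ × ℝ) :=
  {p : ℝ × ℝ | p.1 ∈ Icc (0:ℝ) 1 ∧ p.2 ∈ Icc (0:ℝ) 1 ∧ v * p.1 + (1 - v) * p.2 = v}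

/-- The claimed minimizer, by cases on `v` relative to `v₀ = μ/(2+μ)` and `v₁ = 2/(2+μ)`. -/
def minimizer (μ v : ℝ) : ℝ × ℝ :=
  if v ≤ μ / (2 + μ) then (0, v / (1 - v))
  else if v ≤ 2 / (2 + μ) then (v - μ / 2 * (1 - v), v + μ / 2 * v)
  else (2 - 1 / v, 1)

/-! Along the constraint line the objective is a strictly convex quadratic in `h₁`, with leading
coefficient `v / (1 - v)` and vertex `h₁ = v - (μ/2)(1 - v)`. The feasible `h₁` form the interval
`[max 0 (2 - 1/v), 1]`, and the minimizer is the vertex clamped to it; at that point the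
first-order condition holds, which for a strictly convex quadratic gives both minimality and
uniqueness. -/

/-- The first-order optimality condition for minimizing `fObj μ v` over `constraintSet v`:
`μ + 2 q.1 - 2 q.2` is, up to the factor `v`, the derivative of `fObj μ v` along the constraint
line, parametrized by the first coordinate. -/
def FirstOrderOptimal (μ v : ℝ) (q : ℝ × ℝ) : Prop :=
  q ∈ constraintSet v ∧ ∀ p ∈ constraintSet v, 0 ≤ (μ + 2 * q.1 - 2 * q.2) * (p.1 - q.1)

lemma fObj_sub_fObj_of_line {μ v : ℝ} (hv : v ≠ 1) {p q : ℝ × ℝ}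
    (hpq : v * p.1 + (1 - v) * p.2 = v * q.1 + (1 - v) * q.2) :
    fObj μ v p - fObj μ v q =
      v / (1 - v) * (p.1 - q.1) ^ 2 + v * (μ + 2 * q.1 - 2 * q.2) * (p.1 - q.1) := by
  have h1v : 1 - v ≠ 0 := sub_ne_zero.mpr hv.symm
  have hp2 : p.2 = q.2 - v / (1 - v) * (p.1 - q.1) := by
    field_simp
    linarith
  rw [fObj, fObj, hp2]
  field_simp
  ring

lemma fObj_le_of_firstOrder {μ v : ℝ} (hv : v ∈ Ioo (0:ℝ) 1) {p q : ℝ × ℝ}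
    (hpq : v * p.1 + (1 - v) * p.2 = v * q.1 + (1 - v) * q.2)
    (hopt : 0 ≤ (μ + 2 * q.1 - 2 * q.2) * (p.1 - q.1)) :
    fObj μ v q ≤ fObj μ v p ∧ (fObj μ v p = fObj μ v q → p = q) := by
  obtain ⟨hv0, hv1⟩ := hv
  have hdiff := fObj_sub_fObj_of_line (μ := μ) hv1.ne hpq
  have hc : 0 < v / (1 - v) := div_pos hv0 (sub_pos.mpr hv1)
  have hlin : 0 ≤ v * (μ + 2 * q.1 - 2 * q.2) * (p.1 - q.1) := by
    rw [mul_assoc]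
    exact mul_nonneg hv0.le hopt
  refine ⟨by nlinarith [sq_nonneg (p.1 - q.1)], fun heq => ?_⟩
  have hfst : p.1 = q.1 := by
    have hsq : (p.1 - q.1) ^ 2 = 0 := by nlinarith [sq_nonneg (p.1 - q.1)]
    exact sub_eq_zero.mp (pow_eq_zero_iff two_ne_zero |>.mp hsq)
  have hsnd : p.2 = q.2 := by
    rw [hfst] at hpq
    exact mul_left_cancel₀ (sub_pos.mpr hv1).ne' (by linarith)
  exact Prod.ext hfst hsnd

lemma FirstOrderOptimal.unique_minimizer {μ v : ℝ} (hv : v ∈ Ioo (0:ℝ) 1) {q : ℝ × ℝ}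
    (hq : FirstOrderOptimal μ v q) :
    ∀ p ∈ constraintSet v, fObj μ v q ≤ fObj μ v p ∧ (fObj μ v p = fObj μ v q → p = q) :=
  fun p hp => fObj_le_of_firstOrder hv (hp.2.2.trans hq.1.2.2.symm) (hq.2 p hp)

lemma firstOrderOptimal_of_le_v₀ {μ v : ℝ} (hμ : μ ∈ Icc (0:ℝ) 2) (hv : v ∈ Ioo (0:ℝ) 1)
    (hv₀ : v ≤ μ / (2 + μ)) :
    FirstOrderOptimal μ v (0, v / (1 - v)) := by
  obtain ⟨hμ0, hμ2⟩ := hμ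
  obtain ⟨hv0, hv1⟩ := hv
  have h1v : 0 < 1 - v := sub_pos.mpr hv1
  have hvμ : v * (2 + μ) ≤ μ := (le_div_iff₀ (by linarith)).mp hv₀
  refine ⟨⟨⟨le_rfl, zero_le_one⟩, ⟨by positivity, (div_le_one h1v).mpr (by nlinarith)⟩, ?_⟩, ?_⟩
  · simp only
    field_simp
    ring
  · rintro p ⟨⟨hp1, -⟩, -⟩
    have hslope : 0 ≤ μ + 2 * 0 - 2 * (v / (1 - v)) := by
      rw [mul_div_assoc', sub_nonneg, div_le_iff₀ h1v]
      linarith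
    simpa using mul_nonneg hslope hp1

lemma firstOrderOptimal_of_v₀_lt_of_le_v₁ {μ v : ℝ} (hμ : 0 ≤ μ) (hv : v ∈ Ioo (0:ℝ) 1)
    (hv₀ : μ / (2 + μ) < v) (hv₁ : v ≤ 2 / (2 + μ)) :
    FirstOrderOptimal μ v (v - μ / 2 * (1 - v), v + μ / 2 * v) := by
  obtain ⟨hv0, hv1⟩ := hv
  have hμv : μ < v * (2 + μ) := (div_lt_iff₀ (by linarith)).mp hv₀
  have hvμ : v * (2 + μ) ≤ 2 := (le_div_iff₀ (by linarith)).mp hv₁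
  refine ⟨⟨⟨by nlinarith, by nlinarith⟩, ⟨by nlinarith, by nlinarith⟩, by ring⟩, fun p _ => ?_⟩
  have hslope : μ + 2 * (v - μ / 2 * (1 - v)) - 2 * (v + μ / 2 * v) = 0 := by ring
  simp [hslope]

lemma firstOrderOptimal_of_v₁_lt {μ v : ℝ} (hμ : μ ∈ Icc (0:ℝ) 2) (hv : v ∈ Ioo (0:ℝ) 1)
    (hv₁ : 2 / (2 + μ) < v) :
    FirstOrderOptimal μ v (2 - 1 / v, 1) := by
  obtain ⟨hμ0, hμ2⟩ := hμ
  obtain ⟨hv0, hv1⟩ := hv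
  have hvμ : 2 < v * (2 + μ) := (div_lt_iff₀ (by linarith)).mp hv₁
  have hinv : 1 / v ≤ 2 := by rw [div_le_iff₀ hv0]; nlinarith
  have hinv' : 1 ≤ 1 / v := one_le_one_div hv0 hv1.le
  refine ⟨⟨⟨by linarith, by linarith⟩, ⟨zero_le_one, le_rfl⟩, ?_⟩, ?_⟩
  · simp only
    field_simp
    ring
  · rintro p ⟨-, ⟨-, hp2⟩, hline⟩
    -- `p.2 ≤ 1` on the constraint line is exactly `2 - 1 / v ≤ p.1`
    have hp1 : 2 - p.1 ≤ 1 / v := by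
      rw [le_div_iff₀ hv0]
      nlinarith [mul_le_mul_of_nonneg_left hp2 (sub_pos.mpr hv1).le]
    have hv_inv : 2 / v < 2 + μ := by rw [div_lt_iff₀ hv0]; linarith
    have hslope : 0 ≤ μ + 2 * (2 - 1 / v) - 2 * 1 := by
      rw [mul_sub, mul_one_div]
      linarith
    exact mul_nonneg hslope (by linarith)

lemma firstOrderOptimal_minimizer {μ v : ℝ} (hμ : μ ∈ Icc (0:ℝ) 2) (hv : v ∈ Ioo (0:ℝ) 1) :
    FirstOrderOptimal μ v (minimizer μ v) := by
  unfold minimizer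
  split_ifs with hv₀ hv₁
  · exact firstOrderOptimal_of_le_v₀ hμ hv hv₀
  · exact firstOrderOptimal_of_v₀_lt_of_le_v₁ hμ.1 hv (not_le.mp hv₀) hv₁
  · exact firstOrderOptimal_of_v₁_lt hμ hv (not_le.mp hv₁)

/-- For `μ ∈ [0,2]`, `v ∈ (0,1)`, `fObj` restricted to the constraint set
attains its minimum uniquely at `minimizer μ v`. -/
theorem pointwise_minimizer_unique (μ v : ℝ) (hμ : μ ∈ Icc (0:ℝ) 2) (hv : v ∈ Ioo (0:ℝ) 1) :
    minimizer μ v ∈ constraintSet v ∧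
    ∀ p ∈ constraintSet v,
      fObj μ v (minimizer μ v) ≤ fObj μ v p ∧
      (fObj μ v p = fObj μ v (minimizer μ v) → p = minimizer μ v) := by
  have hopt := firstOrderOptimal_minimizer hμ hv
  exact ⟨hopt.1, hopt.unique_minimizer hv⟩
end
end
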